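/- arXiv:1702.00593 — 4 statements merged into one kernel-verified Lean document; each statement's English description precedes it below -/
import Mathlib

section
/- Let q : I → ℝ be a feasible flow vector that is a holding-free solution. Then q is Pareto optimal in the sense of the paper's dominance relation: there is no feasible flow vector q̃ : I → ℝ such that q̃ i > q i for every i ∈ I. -/
/-!
Suppose a feasible `q'` exceeds `q` on every incoming link. Pick any incoming link `i`; then
`q i < q' i ≤ δ i`, so by the holding-free condition some outgoing link `o` with `f i o > 0` is
saturated by `q`. The flow of `q'` into `o` is strictly larger than that of `q`, because every
coefficient is nonnegative and the one of `i` is positive, so `q'` violates the supply `σ o`.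
-/

open Finset

theorem sum_mul_lt_sum_mul_of_lt {ι : Type*} [Fintype ι] {w x y : ι → ℝ}
    (hw : ∀ i, 0 ≤ w i) (hw_pos : ∃ i, 0 < w i) (hxy : ∀ i, x i < y i) :
    ∑ i, w i * x i < ∑ i, w i * y i := by
  obtain ⟨i, hi⟩ := hw_pos
  exact sum_lt_sum (fun j _ => mul_le_mul_of_nonneg_left (hxy j).le (hw j))
    ⟨i, mem_univ i, mul_lt_mul_of_pos_left (hxy i) hi⟩

theorem exists_saturated_of_lt_demand {I O : Type*} [Fintype I] [Fintype O]
    {δ : I → ℝ} {σ : O → ℝ} {f : I → O → ℝ} {q : I → ℝ} {i : I}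
    (hq_hfs : (δ i - q i) *
        ∏ o ∈ univ.filter (fun o => 0 < f i o), (σ o - ∑ i', f i' o * q i') = 0)
    (hlt : q i < δ i) :
    ∃ o, 0 < f i o ∧ ∑ i', f i' o * q i' = σ o := by
  have hprod := (mul_eq_zero.mp hq_hfs).resolve_left (sub_ne_zero.mpr hlt.ne')
  obtain ⟨o, ho, hsat⟩ := prod_eq_zero_iff.mp hprod
  exact ⟨o, (mem_filter.mp ho).2, (sub_eq_zero.mp hsat).symm⟩

theorem hfs_pareto_optimal_general
    {I O : Type*} [Fintype I] [Fintype O] [Nonempty I]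
    (δ : I → ℝ) (σ : O → ℝ) (f : I → O → ℝ)
    (hf : ∀ i o, 0 ≤ f i o)
    (q : I → ℝ)
    (hq_hfs : ∀ i, (δ i - q i) *
        ∏ o ∈ Finset.univ.filter (fun o => 0 < f i o),
          (σ o - ∑ i', f i' o * q i') = 0) :
    ¬ ∃ q' : I → ℝ,
        ((∀ i, 0 ≤ q' i ∧ q' i ≤ δ i) ∧ (∀ o, ∑ i, f i o * q' i ≤ σ o)) ∧
        (∀ i, q i < q' i) := by
  rintro ⟨q', ⟨hq'_demand, hq'_supply⟩, hlt⟩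
  obtain ⟨i⟩ := ‹Nonempty I›
  obtain ⟨o, hfo, hsat⟩ :=
    exists_saturated_of_lt_demand (hq_hfs i) ((hlt i).trans_le (hq'_demand i).2)
  have hflow_lt := sum_mul_lt_sum_mul_of_lt (fun j => hf j o) ⟨i, hfo⟩ hlt
  linarith [hq'_supply o]

/-- A feasible holding-free solution is Pareto optimal: no feasible
flow vector strictly dominates it in every coordinate. -/
theorem hfs_pareto_optimal
    {I O : Type*} [Fintype I] [Fintype O] [Nonempty I] [Nonempty O]
    (δ : I → ℝ) (σ : O → ℝ) (f : I → O → ℝ)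
    (hδ : ∀ i, 0 ≤ δ i) (hσ : ∀ o, 0 ≤ σ o)
    (hf : ∀ i o, 0 ≤ f i o) (hfsum : ∀ i, ∑ o, f i o = 1)
    (q : I → ℝ)
    (hq_feas : (∀ i, 0 ≤ q i ∧ q i ≤ δ i) ∧ (∀ o, ∑ i, f i o * q i ≤ σ o))
    (hq_hfs : ∀ i, (δ i - q i) *
        ∏ o ∈ Finset.univ.filter (fun o => 0 < f i o),
          (σ o - ∑ i', f i' o * q i') = 0) :
    ¬ ∃ q' : I → ℝ,
        ((∀ i, 0 ≤ q' i ∧ q' i ≤ δ i) ∧ (∀ o, ∑ i, f i o * q' i ≤ σ o)) ∧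
        (∀ i, q i < q' i) :=
  hfs_pareto_optimal_general δ σ f hf q hq_hfs
end

section
/- Let q : I → ℝ be a feasible flow vector that is a holding-free solution. Then q is strongly Pareto optimal: there is no feasible flow vector q̃ : I → ℝ with q̃ ≠ q and q̃ i ≥ q i for every i ∈ I. -/
/-!
If a feasible `q'` dominates `q` and exceeds it on some incoming link `i`, then `i` is not
demand-limited under `q`, so holding-freeness yields an outgoing link `o` with `f i o > 0` whose
supply `q` already exhausts. Under `q'` the flow into `o` strictly increases, exceeding `σ o`.
-/

open Finset

section

variable {I O : Type*} [Fintype I]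

lemma exists_saturated_of_holdingFree [Fintype O] {δ : I → ℝ} {σ : O → ℝ} {f : I → O → ℝ}
    {q : I → ℝ} {i : I}
    (hhfs : (δ i - q i) * ∏ o ∈ univ.filter (fun o => 0 < f i o), (σ o - ∑ j, f j o * q j) = 0)
    (hi : q i < δ i) :
    ∃ o, 0 < f i o ∧ ∑ j, f j o * q j = σ o := by
  obtain ⟨o, ho, hzero⟩ :=
    prod_eq_zero_iff.mp ((mul_eq_zero.mp hhfs).resolve_left (sub_ne_zero.mpr hi.ne'))
  exact ⟨o, (mem_filter.mp ho).2, (sub_eq_zero.mp hzero).symm⟩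

lemma inflow_lt_inflow {f : I → O → ℝ} {o : O} (hf : ∀ j, 0 ≤ f j o) {q q' : I → ℝ}
    (hle : q ≤ q') {i : I} (hi : q i < q' i) (hio : 0 < f i o) :
    ∑ j, f j o * q j < ∑ j, f j o * q' j :=
  sum_lt_sum (fun j _ => mul_le_mul_of_nonneg_left (hle j) (hf j))
    ⟨i, mem_univ i, mul_lt_mul_of_pos_left hi hio⟩

end

theorem hfs_strongly_pareto_optimal_general
    {I O : Type*} [Fintype I] [Fintype O]
    (δ : I → ℝ) (σ : O → ℝ) (f : I → O → ℝ)
    (hf : ∀ i o, 0 ≤ f i o)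
    (q : I → ℝ)
    (hq_hfs : ∀ i, (δ i - q i) *
        ∏ o ∈ Finset.univ.filter (fun o => 0 < f i o),
          (σ o - ∑ i', f i' o * q i') = 0) :
    ¬ ∃ q' : I → ℝ,
        ((∀ i, 0 ≤ q' i ∧ q' i ≤ δ i) ∧ (∀ o, ∑ i, f i o * q' i ≤ σ o)) ∧
        q' ≠ q ∧ (∀ i, q i ≤ q' i) := by
  rintro ⟨q', ⟨hq'_demand, hq'_supply⟩, hne, hle⟩
  obtain ⟨i, hi⟩ := (Pi.lt_def.mp (lt_of_le_of_ne hle hne.symm)).2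
  obtain ⟨o, hio, hsat⟩ :=
    exists_saturated_of_holdingFree (hq_hfs i) (hi.trans_le (hq'_demand i).2)
  have hgrow := inflow_lt_inflow (fun j => hf j o) hle hi hio
  linarith [hq'_supply o]

/-- A feasible holding-free solution is strongly Pareto optimal:
no other feasible flow vector weakly dominates it in every coordinate. -/
theorem hfs_strongly_pareto_optimal
    {I O : Type*} [Fintype I] [Fintype O] [Nonempty I] [Nonempty O]
    (δ : I → ℝ) (σ : O → ℝ) (f : I → O → ℝ)
    (hδ : ∀ i, 0 ≤ δ i) (hσ : ∀ o, 0 ≤ σ o)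
    (hf : ∀ i o, 0 ≤ f i o) (hfsum : ∀ i, ∑ o, f i o = 1)
    (q : I → ℝ)
    (hq_feas : (∀ i, 0 ≤ q i ∧ q i ≤ δ i) ∧ (∀ o, ∑ i, f i o * q i ≤ σ o))
    (hq_hfs : ∀ i, (δ i - q i) *
        ∏ o ∈ Finset.univ.filter (fun o => 0 < f i o),
          (σ o - ∑ i', f i' o * q i') = 0) :
    ¬ ∃ q' : I → ℝ,
        ((∀ i, 0 ≤ q' i ∧ q' i ≤ δ i) ∧ (∀ o, ∑ i, f i o * q' i ≤ σ o)) ∧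
        q' ≠ q ∧ (∀ i, q i ≤ q' i) :=
  hfs_strongly_pareto_optimal_general δ σ f hf q hq_hfs
end

section
/- In the Flötteröd–Rohde example, the INM solution (50/3, 600, 500/3) is a feasible holding-free solution whose total flow 50/3 + 600 + 500/3 = 2350/3 is strictly less than 800, the maximum total flow over the feasible region; concretely, there exists a feasible flow vector (namely (0, 600, 200)) whose total flow strictly exceeds that of the INM solution. -/
/-- A flow vector `(q1, q2, q3)` is feasible in the Flötteröd–Rohde example. -/
def FRFeasible (q1 q2 q3 : ℝ) : Prop :=
  0 ≤ q1 ∧ q1 ≤ 100 ∧ 0 ≤ q2 ∧ q2 ≤ 600 ∧ 0 ≤ q3 ∧ q3 ≤ 600 ∧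
  (1/2) * q3 ≤ 1400 ∧ q1 + (1/2) * q2 + (1/2) * q3 ≤ 400 ∧ (1/2) * q2 ≤ 1400

/-- A flow vector `(q1, q2, q3)` is a holding-free solution in the
Flötteröd–Rohde example. -/
def FRHFS (q1 q2 q3 : ℝ) : Prop :=
  (100 - q1) * (400 - q1 - (1/2) * q2 - (1/2) * q3) = 0 ∧
  (600 - q2) * (400 - q1 - (1/2) * q2 - (1/2) * q3) * (1400 - (1/2) * q2) = 0 ∧
  (600 - q3) * (1400 - (1/2) * q3) * (400 - q1 - (1/2) * q2 - (1/2) * q3) = 0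

theorem frFeasible_inm : FRFeasible (50/3) 600 (500/3) := by
  unfold FRFeasible; norm_num

/-- The INM solution saturates the supply of link 5, which makes every HFS product vanish. -/
theorem frHFS_inm : FRHFS (50/3) 600 (500/3) := by
  unfold FRHFS; norm_num

theorem frFeasible_zero_600_200 : FRFeasible 0 600 200 := by
  unfold FRFeasible; norm_num

/-- Doubling the supply constraint of link 5 gives `q1 + q2 + q3 ≤ 800 - q1`. -/
theorem FRFeasible.add_add_le {q1 q2 q3 : ℝ} (h : FRFeasible q1 q2 q3) :
    q1 + q2 + q3 ≤ 800 := by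
  obtain ⟨hq1, -, -, -, -, -, -, hsupply5, -⟩ := h
  linarith

theorem isGreatest_frFeasible_total :
    IsGreatest {s : ℝ | ∃ q1 q2 q3 : ℝ, FRFeasible q1 q2 q3 ∧ q1 + q2 + q3 = s} 800 := by
  refine ⟨⟨0, 600, 200, frFeasible_zero_600_200, by norm_num⟩, ?_⟩
  rintro s ⟨q1, q2, q3, h, rfl⟩
  exact h.add_add_le

/-- the INM solution is a feasible HFS with total flow
2350/3 < 800 (the maximum total flow); concretely (0, 600, 200) is feasible
with strictly larger total flow. -/
theorem inm_suboptimal_total_flow :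
    (FRFeasible (50/3) 600 (500/3) ∧ FRHFS (50/3) 600 (500/3)) ∧
    (50/3 + 600 + 500/3 : ℝ) = 2350/3 ∧
    (2350/3 : ℝ) < 800 ∧
    IsGreatest {s : ℝ | ∃ q1 q2 q3 : ℝ, FRFeasible q1 q2 q3 ∧ q1 + q2 + q3 = s}
      800 ∧
    (FRFeasible 0 600 200 ∧ (50/3 + 600 + 500/3 : ℝ) < 0 + 600 + 200) :=
  ⟨⟨frFeasible_inm, frHFS_inm⟩, by norm_num, by norm_num, isGreatest_frFeasible_total,
    frFeasible_zero_600_200, by norm_num⟩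
end

section
/- In the Flötteröd–Rohde example, a feasible flow vector (q1, q2, q3) is a holding-free solution if and only if the west-supply constraint is binding, i.e. q1 + (1/2)*q2 + (1/2)*q3 = 400; hence the set of feasible holding-free solutions (the Pareto frontier) is exactly the intersection of the feasible region with the plane q1 + (1/2)*q2 + (1/2)*q3 = 400. -/
theorem frhfs_iff_binding_or_eq_demand {q1 q2 q3 : ℝ} (h2 : (1/2) * q2 ≠ 1400)
    (h3 : (1/2) * q3 ≠ 1400) :
    FRHFS q1 q2 q3 ↔
      q1 + (1/2) * q2 + (1/2) * q3 = 400 ∨ (q1 = 100 ∧ q2 = 600 ∧ q3 = 600) := by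
  have hslack : 400 - q1 - (1/2) * q2 - (1/2) * q3 = 0 ↔ q1 + (1/2) * q2 + (1/2) * q3 = 400 :=
    ⟨fun h => by linarith, fun h => by linarith⟩
  simp only [FRHFS, mul_eq_zero, sub_ne_zero.mpr h2.symm, sub_ne_zero.mpr h3.symm, or_false,
    hslack, sub_eq_zero, eq_comm (a := (100 : ℝ)), eq_comm (a := (600 : ℝ))]
  tauto

theorem not_frFeasible_demand : ¬ FRFeasible 100 600 600 := by
  rintro ⟨-, -, -, -, -, -, -, hwest, -⟩
  norm_num at hwest

theorem FRFeasible.frhfs_iff {q1 q2 q3 : ℝ} (hq : FRFeasible q1 q2 q3) :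
    FRHFS q1 q2 q3 ↔ q1 + (1/2) * q2 + (1/2) * q3 = 400 := by
  obtain ⟨-, -, -, hq2, -, hq3, -⟩ := id hq
  rw [frhfs_iff_binding_or_eq_demand (by linarith) (by linarith), or_iff_left]
  rintro ⟨rfl, rfl, rfl⟩
  exact not_frFeasible_demand hq

/-- a feasible flow vector is an HFS iff the west-supply
constraint is binding; hence the set of feasible HFSs is exactly the part of
the feasible region lying in the plane q1 + q2/2 + q3/2 = 400. -/
theorem hfs_iff_west_supply_binding :
    (∀ q1 q2 q3 : ℝ, FRFeasible q1 q2 q3 →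
      (FRHFS q1 q2 q3 ↔ q1 + (1/2) * q2 + (1/2) * q3 = 400)) ∧
    {q : ℝ × ℝ × ℝ | FRFeasible q.1 q.2.1 q.2.2 ∧ FRHFS q.1 q.2.1 q.2.2} =
      {q : ℝ × ℝ × ℝ | FRFeasible q.1 q.2.1 q.2.2 ∧
        q.1 + (1/2) * q.2.1 + (1/2) * q.2.2 = 400} :=
  ⟨fun _ _ _ hq => hq.frhfs_iff,
    Set.ext fun _ => and_congr_right FRFeasible.frhfs_iff⟩
end
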